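/- arXiv:2508.10888 — 2 statements merged into one kernel-verified Lean document; each statement's English description precedes it below -/
import Mathlib

section
/- Let f: [0,∞) → ℝ be monotone increasing with f(0) = 0. For any ε ∈ (0,1), consider the two-point metric space X = {x₁, x₂} with d(x₁,x₂) = √(2/((1−ε)·ε))·f(ε), the probability measure μ = δ_{x₁}, and the perturbed measure μ' with μ'(x₁) = 1−ε, μ'(x₂) = ε. Then the total variation distance between μ and μ' is at most ε, and the 2-Gromov-Wasserstein distance from (X, d, μ') to the one-point metric measure space equals (1/2)·√((1−ε)ε)·√2·d(x₁,x₂) = f(ε), while the 2-GW distance from (X, d, μ) to the one-point space is 0. -/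
/-!
The 2-GW distance from `(X, d, ν)` to the one-point space is `(1/2) (∫∫ d² dν dν)^{1/2}`, since
`ν ⊗ δ` is the only coupling. For a Dirac mass this vanishes, while for the two-point measure
`(1 - ε) δ_{x₁} + ε δ_{x₂}` the double integral is `2 (1 - ε) ε d(x₁, x₂)²`; the choice of
`d(x₁, x₂)` makes the resulting distance exactly `f ε`, although the two measures are `ε`-close
in total variation.
-/

open MeasureTheory

section TwoPoint

variable {α : Type*} [MeasurableSpace α] [MeasurableSingletonClass α]

lemma integral_smul_dirac_add_smul_dirac {p q : ℝ} (hp : 0 ≤ p) (hq : 0 ≤ q) (a b : α)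
    (g : α → ℝ) :
    ∫ x, g x ∂(ENNReal.ofReal p • Measure.dirac a + ENNReal.ofReal q • Measure.dirac b) =
      p * g a + q * g b := by
  have hint : ∀ (c : ℝ) (y : α), Integrable g (ENNReal.ofReal c • Measure.dirac y) :=
    fun c y => (integrable_dirac enorm_lt_top).smul_measure ENNReal.ofReal_ne_top
  rw [integral_add_measure (hint p a) (hint q b), integral_smul_measure, integral_smul_measure,
    integral_dirac, integral_dirac, ENNReal.toReal_ofReal hp, ENNReal.toReal_ofReal hq,
    smul_eq_mul, smul_eq_mul]

lemma integral_integral_smul_dirac_add_smul_dirac {p q : ℝ} (hp : 0 ≤ p) (hq : 0 ≤ q)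
    (a b : α) (k : α → α → ℝ) (haa : k a a = 0) (hbb : k b b = 0) :
    ∫ x, ∫ x', k x x' ∂(ENNReal.ofReal p • Measure.dirac a + ENNReal.ofReal q • Measure.dirac b)
        ∂(ENNReal.ofReal p • Measure.dirac a + ENNReal.ofReal q • Measure.dirac b) =
      p * q * (k a b + k b a) := by
  simp only [integral_smul_dirac_add_smul_dirac hp hq, haa, hbb]
  ring

lemma abs_dirac_sub_smul_dirac_add_smul_dirac_le {ε : ℝ} (hε₀ : 0 ≤ ε) (hε₁ : ε ≤ 1)
    (a b : α) (A : Set α) :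
    |(Measure.dirac a A).toReal -
        ((ENNReal.ofReal (1 - ε) • Measure.dirac a + ENNReal.ofReal ε • Measure.dirac b) A).toReal|
      ≤ ε := by
  have hε₁' : 0 ≤ 1 - ε := sub_nonneg.mpr hε₁
  simp only [Measure.coe_add, Measure.coe_smul, Pi.add_apply, Pi.smul_apply,
    Measure.dirac_apply, smul_eq_mul]
  rw [abs_le]
  by_cases ha : a ∈ A <;> by_cases hb : b ∈ A <;>
    simp [ha, hb, ENNReal.toReal_add, ENNReal.toReal_ofReal, hε₀, hε₁']

end TwoPoint

lemma sqrt_mul_sqrt_two_mul_sqrt_two_div {t : ℝ} (ht : 0 < t) :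
    Real.sqrt t * Real.sqrt 2 * Real.sqrt (2 / t) = 2 := by
  rw [mul_comm (Real.sqrt t), mul_assoc, ← Real.sqrt_mul ht.le, mul_div_cancel₀ _ ht.ne',
    Real.mul_self_sqrt zero_le_two]

theorem gw_not_robust (f : ℝ → ℝ) (hmono : MonotoneOn f (Set.Ici 0))
    (hf0 : f 0 = 0) (ε : ℝ) (hε : ε ∈ Set.Ioo (0 : ℝ) 1)
    (D : ℝ) (hD : D = Real.sqrt (2 / ((1 - ε) * ε)) * f ε)
    (d : Bool → Bool → ℝ) (hd : ∀ x y, d x y = if x = y then 0 else D)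
    (μ μ' : Measure Bool) (hμ : μ = Measure.dirac false)
    (hμ' : μ' = ENNReal.ofReal (1 - ε) • Measure.dirac false
        + ENNReal.ofReal ε • Measure.dirac true) :
    (∀ A : Set Bool, |(μ A).toReal - (μ' A).toReal| ≤ ε) ∧
    (1 / 2) * Real.sqrt (∫ x, ∫ x', (d x x') ^ 2 ∂μ' ∂μ') = f ε ∧
    (1 / 2) * Real.sqrt ((1 - ε) * ε) * Real.sqrt 2 * d false true = f ε ∧
    (1 / 2) * Real.sqrt (∫ x, ∫ x', (d x x') ^ 2 ∂μ ∂μ) = 0 := by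
  obtain ⟨hε₀, hε₁⟩ := hε
  have hprod : 0 < (1 - ε) * ε := mul_pos (sub_pos.mpr hε₁) hε₀
  have hfε : 0 ≤ f ε := hf0 ▸ hmono (Set.mem_Ici.mpr le_rfl) hε₀.le hε₀.le
  have hD₀ : 0 ≤ D := hD ▸ mul_nonneg (Real.sqrt_nonneg _) hfε
  have hd_diag : ∀ x, d x x = 0 := fun x => by simp [hd]
  have hd_off : d false true = D := by simp [hd]
  have hd_off' : d true false = D := by simp [hd]
  have hgap : (1 / 2) * Real.sqrt ((1 - ε) * ε) * Real.sqrt 2 * D = f ε := by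
    rw [hD]
    linear_combination (1 / 2 * f ε) * sqrt_mul_sqrt_two_mul_sqrt_two_div hprod
  have hvar : ∫ x, ∫ x', (d x x') ^ 2 ∂μ' ∂μ' = ((1 - ε) * ε) * 2 * D ^ 2 := by
    rw [hμ', integral_integral_smul_dirac_add_smul_dirac (sub_pos.mpr hε₁).le hε₀.le false true
      (fun x x' => d x x' ^ 2) (by simp [hd_diag]) (by simp [hd_diag]), hd_off, hd_off']
    ring
  refine ⟨fun A => hμ ▸ hμ' ▸ abs_dirac_sub_smul_dirac_add_smul_dirac_le hε₀.le hε₁.le _ _ A,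
    ?_, hd_off ▸ hgap, ?_⟩
  · rw [hvar, Real.sqrt_mul (by positivity), Real.sqrt_mul hprod.le, Real.sqrt_sq hD₀, ← hgap]
    ring
  · simp [hμ, hd_diag]
end

section
/- Let X be a measurable space, μ and μ' finite measures on X with (1−ε)μ ≤ μ' ≤ (1+ε)μ for some ε ∈ [0,1], and let Ω: [0,∞) → [0,1] with Ω(0) = 1, δ > 0, and ω: X × X → ℝ a bounded measurable kernel. Then 4δ²(μ(X)² + μ'(X)²) − 8δ² ∫∫ √((dμ'/dμ)(x)·(dμ'/dμ)(x')) dμ(x) dμ(x') ≤ 4δ²·μ(X)²·(ε² + 4ε). -/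
open MeasureTheory

theorem cgw_robustness_estimate {X : Type*} [MeasurableSpace X]
    (μ μ' : Measure X) [IsFiniteMeasure μ] [IsFiniteMeasure μ']
    (ε : ℝ) (hε : ε ∈ Set.Icc (0 : ℝ) 1)
    (hlow : ENNReal.ofReal (1 - ε) • μ ≤ μ')
    (hup : μ' ≤ ENNReal.ofReal (1 + ε) • μ)
    (Ω : ℝ → ℝ) (hΩ : ∀ z : ℝ, 0 ≤ z → Ω z ∈ Set.Icc (0 : ℝ) 1) (hΩ0 : Ω 0 = 1)
    (δ : ℝ) (hδ : 0 < δ)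
    (ω : X → X → ℝ) (hωmeas : Measurable (Function.uncurry ω))
    (hωbdd : ∃ C : ℝ, ∀ x y, |ω x y| ≤ C) :
    4 * δ ^ 2 * ((μ Set.univ).toReal ^ 2 + (μ' Set.univ).toReal ^ 2)
      - 8 * δ ^ 2 *
        ∫ x, ∫ x', Real.sqrt ((μ'.rnDeriv μ x).toReal * (μ'.rnDeriv μ x').toReal)
          ∂μ ∂μ ≤
      4 * δ ^ 2 * (μ Set.univ).toReal ^ 2 * (ε ^ 2 + 4 * ε) := by
  obtain ⟨hε0, hε1⟩ := hε
  set m : ℝ := (μ Set.univ).toReal with hm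
  set m' : ℝ := (μ' Set.univ).toReal with hm'
  have hμ'ac : μ' ≪ μ := by
    refine Measure.AbsolutelyContinuous.mk fun s hs h0 => ?_
    have := hup s
    simp only [Measure.smul_apply, smul_eq_mul, h0, mul_zero] at this
    exact le_antisymm this zero_le
  -- a.e. lower bound for rnDeriv
  have hlow_ae : ∀ᵐ x ∂μ, ENNReal.ofReal (1 - ε) ≤ μ'.rnDeriv μ x := by
    refine ae_le_of_forall_setLIntegral_le_of_sigmaFinite measurable_const
      fun s hs _ => ?_
    rw [Measure.setLIntegral_rnDeriv hμ'ac, setLIntegral_const]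
    have := hlow s
    simpa [mul_comm] using this
  have hup_ae : ∀ᵐ x ∂μ, μ'.rnDeriv μ x ≤ ENNReal.ofReal (1 + ε) := by
    refine ae_le_of_forall_setLIntegral_le_of_sigmaFinite
      (Measure.measurable_rnDeriv _ _) fun s hs _ => ?_
    rw [setLIntegral_const]
    refine (Measure.setLIntegral_rnDeriv_le s).trans ?_
    have := hup s
    simpa [mul_comm] using this
  have hfin := μ'.rnDeriv_lt_top μ
  set f : X → ℝ := fun x => (μ'.rnDeriv μ x).toReal with hf
  set g : X → ℝ := fun x => Real.sqrt (f x) with hg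
  have hgmeas : Measurable g :=
    (Measure.measurable_rnDeriv _ _).ennreal_toReal.sqrt
  have hflb : ∀ᵐ x ∂μ, 1 - ε ≤ f x := by
    filter_upwards [hlow_ae, hfin] with x h1 h2
    have : (ENNReal.ofReal (1 - ε)).toReal ≤ (μ'.rnDeriv μ x).toReal :=
      ENNReal.toReal_mono h2.ne h1
    rwa [ENNReal.toReal_ofReal (by linarith)] at this
  have hfub : ∀ᵐ x ∂μ, f x ≤ 1 + ε := by
    filter_upwards [hup_ae] with x h1
    have : (μ'.rnDeriv μ x).toReal ≤ (ENNReal.ofReal (1 + ε)).toReal :=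
      ENNReal.toReal_mono (by simp) h1
    rwa [ENNReal.toReal_ofReal (by linarith)] at this
  have hglb : ∀ᵐ x ∂μ, Real.sqrt (1 - ε) ≤ g x := by
    filter_upwards [hflb] with x h using Real.sqrt_le_sqrt h
  have hgint : Integrable g μ := by
    refine Integrable.mono' (integrable_const (Real.sqrt (1 + ε)))
      hgmeas.aestronglyMeasurable ?_
    filter_upwards [hfub] with x h
    rw [Real.norm_eq_abs, abs_of_nonneg (Real.sqrt_nonneg _)]
    exact Real.sqrt_le_sqrt h
  -- the double integral equals (∫ g)²
  have hI : (∫ x, ∫ x', Real.sqrt (f x * f x') ∂μ ∂μ) = (∫ x, g x ∂μ) ^ 2 := by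
    have h1 : ∀ x, (∫ x', Real.sqrt (f x * f x') ∂μ) = g x * ∫ x', g x' ∂μ := by
      intro x
      rw [← integral_const_mul]
      congr 1 with x'
      exact Real.sqrt_mul ENNReal.toReal_nonneg _
    simp_rw [h1]
    rw [integral_mul_const, sq]
  -- lower bound for ∫ g
  have hint_lb : Real.sqrt (1 - ε) * m ≤ ∫ x, g x ∂μ := by
    have := integral_mono_ae (integrable_const (Real.sqrt (1 - ε))) hgint hglb
    rwa [integral_const, smul_eq_mul, mul_comm] at this
  have hm0 : 0 ≤ m := ENNReal.toReal_nonneg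
  have hm'0 : 0 ≤ m' := ENNReal.toReal_nonneg
  have hIlb : (1 - ε) * m ^ 2 ≤ ∫ x, ∫ x', Real.sqrt (f x * f x') ∂μ ∂μ := by
    rw [hI]
    have h0 : 0 ≤ Real.sqrt (1 - ε) * m := mul_nonneg (Real.sqrt_nonneg _) hm0
    calc (1 - ε) * m ^ 2 = (Real.sqrt (1 - ε) * m) ^ 2 := by
          rw [mul_pow, Real.sq_sqrt (by linarith)]
      _ ≤ (∫ x, g x ∂μ) ^ 2 := by
          apply sq_le_sq' <;> nlinarith [hint_lb]
  -- upper bound for m'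
  have hm'ub : m' ≤ (1 + ε) * m := by
    have h := hup Set.univ
    simp only [Measure.smul_apply, smul_eq_mul] at h
    have h2 : (μ' Set.univ).toReal ≤ (ENNReal.ofReal (1 + ε) * μ Set.univ).toReal :=
      ENNReal.toReal_mono (ENNReal.mul_ne_top ENNReal.ofReal_ne_top (measure_ne_top _ _)) h
    rwa [ENNReal.toReal_mul, ENNReal.toReal_ofReal (by linarith)] at h2
  simp only [hf] at hIlb
  have hδ2 : 0 < δ ^ 2 := by positivity
  have h2 : m' ^ 2 ≤ ((1 + ε) * m) ^ 2 := by nlinarith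
  nlinarith [mul_le_mul_of_nonneg_left hIlb (le_of_lt hδ2),
    mul_le_mul_of_nonneg_left h2 (le_of_lt hδ2)]
end
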